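/- arXiv:2303.15976 — 5 statements merged into one kernel-verified Lean document; each statement's English description precedes it below -/
import Mathlib

section
/- For a convex body K in R^n with centroid at the origin, the difference body K - K is contained in (n+1)·K. -/
/-!
Shrinking `K` towards a point `y ∈ K` by the homothety `h` of ratio `r ∈ (0, 1)` removes a shell
`K \ h(K)`. Since `∫_K x = 0`, and a homothety multiplies volumes by `rⁿ`, the centroid of the
shell is `-(rⁿ (1 - r) / (1 - rⁿ)) • y`, which lies in `K` by convexity. Letting `r → 1` gives
`-y/n ∈ K` (Minkowski–Radon), so `-K ⊆ n • K` and `K - K ⊆ K + n • K = (n + 1) • K`.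
-/

open MeasureTheory Pointwise Filter Topology

theorem Convex.image_homothety_subset {E : Type*} [AddCommGroup E] [Module ℝ E] {K : Set E}
    (hconv : Convex ℝ K) {c : E} (hc : c ∈ K) {r : ℝ} (hr : r ∈ Set.Icc 0 1) :
    AffineMap.homothety c r '' K ⊆ K := by
  rintro _ ⟨x, hx, rfl⟩
  rw [AffineMap.homothety_eq_lineMap]
  exact hconv.lineMap_mem hc hx hr

theorem tendsto_pow_mul_one_sub_div_one_sub_pow {d : ℕ} (hd : d ≠ 0) :
    Tendsto (fun r : ℝ => r ^ d * (1 - r) / (1 - r ^ d)) (𝓝[<] 1) (𝓝 (d : ℝ)⁻¹) := by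
  have hgeom : (fun r : ℝ => r ^ d / ∑ i ∈ Finset.range d, r ^ i)
      =ᶠ[𝓝[<] 1] fun r => r ^ d * (1 - r) / (1 - r ^ d) := by
    filter_upwards [self_mem_nhdsWithin] with r (hr : r < 1)
    rw [← mul_neg_geom_sum, mul_comm (1 - r), mul_div_mul_right _ _ (sub_ne_zero.2 hr.ne')]
  refine Tendsto.congr' hgeom (tendsto_nhdsWithin_of_tendsto_nhds ?_)
  have hsum : Tendsto (fun r : ℝ => ∑ i ∈ Finset.range d, r ^ i) (𝓝 1) (𝓝 d) := by
    simpa using (continuous_finsetSum (Finset.range d) fun i _ => continuous_pow i).tendsto (1 : ℝ)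
  have hdiv := ((continuous_pow d).tendsto (1 : ℝ)).div hsum (Nat.cast_ne_zero.2 hd)
  rwa [one_pow, one_div] at hdiv

section AddHaar

variable {E : Type*} [NormedAddCommGroup E] [NormedSpace ℝ E] [MeasurableSpace E] [BorelSpace E]
  [FiniteDimensional ℝ E] (μ : Measure E) [μ.IsAddHaarMeasure]

theorem setIntegral_image_homothety {F : Type*} [NormedAddCommGroup F] [NormedSpace ℝ F]
    {s : Set E} (hs : MeasurableSet s) (c : E) {r : ℝ} (hr : r ≠ 0) (f : E → F) :
    ∫ x in AffineMap.homothety c r '' s, f x ∂μ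
      = |r ^ Module.finrank ℝ E| • ∫ x in s, f (AffineMap.homothety c r x) ∂μ := by
  have hderiv : ∀ x ∈ s, HasFDerivWithinAt (AffineMap.homothety c r)
      (r • ContinuousLinearMap.id ℝ E) s x := fun x _ => by
    simp only [AffineMap.coe_homothety, vsub_eq_sub, vadd_eq_add]
    exact (((hasFDerivAt_id x).sub_const c).const_smul r).add_const c |>.hasFDerivWithinAt
  rw [integral_image_eq_integral_abs_det_fderiv_smul μ hs hderiv
    (AffineMap.homothety_injective c hr).injOn, integral_smul]
  simp [ContinuousLinearMap.det, LinearMap.det_smul]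

theorem measureReal_image_homothety (c : E) (r : ℝ) (s : Set E) :
    μ.real (AffineMap.homothety c r '' s) = |r ^ Module.finrank ℝ E| * μ.real s := by
  simp [measureReal_def]

variable {μ} {K : Set E}

theorem measureReal_sdiff_image_homothety (hK : IsCompact K) {c : E} {r : ℝ} (hr : 0 ≤ r)
    (hsub : AffineMap.homothety c r '' K ⊆ K) :
    μ.real (K \ AffineMap.homothety c r '' K) = (1 - r ^ Module.finrank ℝ E) * μ.real K := by
  rw [measureReal_sdiff hsub (hK.image (AffineMap.homothety_continuous c r)).measurableSet
    hK.measure_lt_top.ne, measureReal_image_homothety, abs_of_nonneg (pow_nonneg hr _)]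
  ring

theorem setIntegral_image_homothety_of_setIntegral_eq_zero (hK : IsCompact K)
    (hcent : ∫ x in K, x ∂μ = 0) (c : E) {r : ℝ} (hr : 0 < r) :
    ∫ x in AffineMap.homothety c r '' K, x ∂μ
      = (r ^ Module.finrank ℝ E * (1 - r) * μ.real K) • c := by
  have : Fact (μ K < ⊤) := ⟨hK.measure_lt_top⟩
  have hhom : ∀ x, AffineMap.homothety c r x = r • x + (1 - r) • c := fun x => by
    rw [AffineMap.homothety_apply, vsub_eq_sub, vadd_eq_add]
    module
  rw [setIntegral_image_homothety μ hK.measurableSet c hr.ne', abs_of_pos (pow_pos hr _)]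
  simp_rw [hhom]
  rw [integral_add ((continuous_const_smul r).continuousOn.integrableOn_compact hK)
    (integrable_const _), integral_smul, hcent, setIntegral_const]
  match_scalars
  ring

theorem setAverage_sdiff_image_homothety (hK : IsCompact K) (hK0 : μ K ≠ 0)
    (hcent : ∫ x in K, x ∂μ = 0) {c : E} {r : ℝ} (hr : 0 < r)
    (hsub : AffineMap.homothety c r '' K ⊆ K) :
    ⨍ x in K \ AffineMap.homothety c r '' K, x ∂μ
      = -(r ^ Module.finrank ℝ E * (1 - r) / (1 - r ^ Module.finrank ℝ E)) • c := by
  have hV : μ.real K ≠ 0 := (measureReal_ne_zero_iff hK.measure_lt_top.ne).2 hK0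
  rw [setAverage_eq, measureReal_sdiff_image_homothety hK hr.le hsub,
    setIntegral_sdiff (hK.image (AffineMap.homothety_continuous c r)).measurableSet
      (continuous_id'.continuousOn.integrableOn_compact hK) hsub,
    hcent, setIntegral_image_homothety_of_setIntegral_eq_zero hK hcent c hr, zero_sub, smul_neg,
    smul_smul, ← neg_smul, mul_inv]
  field_simp

theorem Convex.neg_inv_finrank_smul_mem_of_setIntegral_eq_zero (hconv : Convex ℝ K)
    (hK : IsCompact K) (hK0 : μ K ≠ 0) (hcent : ∫ x in K, x ∂μ = 0)
    (hd : Module.finrank ℝ E ≠ 0) {y : E} (hy : y ∈ K) :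
    -(Module.finrank ℝ E : ℝ)⁻¹ • y ∈ K := by
  refine hK.isClosed.mem_of_tendsto
    ((tendsto_pow_mul_one_sub_div_one_sub_pow hd).neg.smul_const y) ?_
  filter_upwards [Ioo_mem_nhdsLT zero_lt_one] with r hr
  have hsub := hconv.image_homothety_subset hy ⟨hr.1.le, hr.2.le⟩
  have hmeas : MeasurableSet (K \ AffineMap.homothety y r '' K) :=
    hK.measurableSet.diff (hK.image (AffineMap.homothety_continuous y r)).measurableSet
  have hfin : μ (K \ AffineMap.homothety y r '' K) ≠ ⊤ :=
    measure_ne_top_of_subset Set.sdiff_subset hK.measure_lt_top.ne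
  have hshell : μ (K \ AffineMap.homothety y r '' K) ≠ 0 := by
    rw [← measureReal_ne_zero_iff hfin, measureReal_sdiff_image_homothety hK hr.1.le hsub]
    exact mul_ne_zero (sub_ne_zero.2 (pow_lt_one₀ hr.1.le hr.2 hd).ne')
      ((measureReal_ne_zero_iff hK.measure_lt_top.ne).2 hK0)
  rw [← setAverage_sdiff_image_homothety hK hK0 hcent hr.1 hsub]
  exact hconv.set_average_mem hK.isClosed hshell hfin
    (ae_restrict_of_forall_mem hmeas fun x hx => hx.1)
    ((continuous_id'.continuousOn.integrableOn_compact hK).mono_set Set.sdiff_subset)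

theorem Convex.sub_subset_finrank_add_one_smul_of_setIntegral_eq_zero (hconv : Convex ℝ K)
    (hK : IsCompact K) (hK0 : μ K ≠ 0) (hcent : ∫ x in K, x ∂μ = 0) :
    K - K ⊆ ((Module.finrank ℝ E : ℝ) + 1) • K := by
  rcases eq_or_ne (Module.finrank ℝ E) 0 with hd | hd
  · have : Subsingleton E := Module.finrank_zero_iff.1 hd
    rintro _ ⟨x, hx, y, -, rfl⟩
    rw [hd, Nat.cast_zero, zero_add, one_smul]
    convert hx using 1
  have hneg : -K ⊆ (Module.finrank ℝ E : ℝ) • K := fun y hy =>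
    ⟨_, hconv.neg_inv_finrank_smul_mem_of_setIntegral_eq_zero hK hK0 hcent hd hy, by
      simp [smul_smul, hd]⟩
  calc K - K = K + -K := sub_eq_add_neg K K
    _ ⊆ K + (Module.finrank ℝ E : ℝ) • K := Set.add_subset_add_left hneg
    _ = ((Module.finrank ℝ E : ℝ) + 1) • K := by
      rw [add_comm _ (1 : ℝ), hconv.add_smul zero_le_one (Nat.cast_nonneg _), one_smul]

end AddHaar

/-- For a convex body `K ⊆ ℝⁿ` (compact, convex, with nonempty interior)
whose centroid is the origin, the difference body `K - K` is contained in `(n+1) • K`. -/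
theorem difference_body_subset_of_centered {n : ℕ} (K : Set (Fin n → ℝ))
    (hconv : Convex ℝ K) (hcomp : IsCompact K) (hint : (interior K).Nonempty)
    (hcent : (∫ x in K, x ∂(volume)) = (0 : Fin n → ℝ)) :
    K - K ⊆ ((n : ℝ) + 1) • K := by
  have hK0 : volume K ≠ 0 := (Measure.measure_pos_of_nonempty_interior volume hint).ne'
  simpa [Module.finrank_fin_fun] using
    hconv.sub_subset_finrank_add_one_smul_of_setIntegral_eq_zero hcomp hK0 hcent
end

section
/- For every convex body K in R^n with covering radius μ(K) ≤ 1 with respect to Z^n, the number of lattice points satisfies (1−μ(K))^n · vol(K) ≤ |K ∩ Z^n|. -/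
/-!
If `μ • K + ℤⁿ = ℝⁿ` with `0 ≤ μ ≤ 1`, then every translate `x + (1 - μ) • K` contains at most
`|K ∩ ℤⁿ|` lattice points: writing `-x = μ • c + z` with `c ∈ K`, `z ∈ ℤⁿ`, the shift `y ↦ y - z`
maps them into `K`, because `(1 - μ) • k + μ • c ∈ K` by convexity. Averaging the number of lattice
points of these translates over a fundamental domain of `ℤⁿ` gives
`vol((1 - μ) • K) ≤ |K ∩ ℤⁿ|`, and letting `μ` decrease to `μ(K)` gives the theorem.
-/

open MeasureTheory Pointwise

/-- The integer lattice `ℤⁿ` viewed as a subset of `ℝⁿ`. -/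
def intLat (n : ℕ) : Set (Fin n → ℝ) := {x | ∀ i, ∃ m : ℤ, x i = (m : ℝ)}

/-- The number of integer points of a set `S ⊆ ℝⁿ`. -/
noncomputable def latCount {n : ℕ} (S : Set (Fin n → ℝ)) : ℕ :=
  Nat.card ↥(S ∩ intLat n)

/-- The covering radius of `K` with respect to `ℤⁿ`. -/
noncomputable def covRad {n : ℕ} (K : Set (Fin n → ℝ)) : ℝ :=
  sInf {μ : ℝ | 0 ≤ μ ∧ ∀ x : Fin n → ℝ, ∃ c ∈ K, ∃ z ∈ intLat n, x = μ • c + z}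

open Module Submodule Set
open scoped ENNReal

def IsCoveringScale {E : Type*} [AddCommGroup E] [Module ℝ E] (K L : Set E) (μ : ℝ) : Prop :=
  ∀ x, ∃ c ∈ K, ∃ z ∈ L, x = μ • c + z

theorem tsum_indicator_vadd_eq_encard {G α : Type*} [VAdd G α] (s : Set α) (x : α) :
    ∑' g : G, s.indicator 1 (g +ᵥ x) = ({g : G | g +ᵥ x ∈ s}.encard : ℝ≥0∞) := by
  rw [← ENNReal.tsum_set_one, tsum_subtype _ fun _ => (1 : ℝ≥0∞)]
  rfl

theorem MeasureTheory.IsAddFundamentalDomain.measure_le_mul_of_encard_le {G α : Type*}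
    [AddGroup G] [Countable G] [MeasurableSpace G] [AddAction G α] [MeasurableSpace α]
    [MeasurableVAdd G α] {μ : Measure α} [VAddInvariantMeasure G α μ] {F s : Set α}
    (fund : IsAddFundamentalDomain G F μ) (hs : NullMeasurableSet s μ) {N : ℕ∞}
    (hN : ∀ x, {g : G | g +ᵥ x ∈ s}.encard ≤ N) :
    μ s ≤ N * μ F :=
  calc μ s = ∫⁻ x, s.indicator 1 x ∂μ := (lintegral_indicator_one₀ hs).symm
    _ = ∑' g : G, ∫⁻ x in F, s.indicator 1 (g +ᵥ x) ∂μ := fund.lintegral_eq_tsum'' _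
    _ = ∫⁻ x in F, ∑' g : G, s.indicator 1 (g +ᵥ x) ∂μ :=
      (lintegral_tsum fun g => ((aemeasurable_one.indicator₀ hs).comp_quasiMeasurePreserving
        (measurePreserving_vadd g μ).quasiMeasurePreserving).restrict).symm
    _ = ∫⁻ x in F, ({g : G | g +ᵥ x ∈ s}.encard : ℝ≥0∞) ∂μ := by
      simp_rw [tsum_indicator_vadd_eq_encard]
    _ ≤ ∫⁻ _ in F, (N : ℝ≥0∞) ∂μ := lintegral_mono fun x => ENat.toENNReal_le.mpr (hN x)
    _ = N * μ F := setLIntegral_const F _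

theorem encard_vadd_mem_smul_le {E : Type*} [AddCommGroup E] [Module ℝ E] {K : Set E}
    (hK : Convex ℝ K) {L : AddSubgroup E} {s : ℝ} (hs0 : 0 ≤ s) (hs1 : s ≤ 1)
    (hcov : IsCoveringScale K L s) (x : E) :
    {g : L | g +ᵥ x ∈ (1 - s) • K}.encard ≤ (K ∩ L).encard := by
  obtain ⟨c, hc, z, hz, hxz⟩ := hcov (-x)
  refine Set.encard_le_encard_of_injOn (f := fun g : L => (g : E) - z) ?_ ?_
  · rintro g ⟨k, hk, hgk⟩
    refine ⟨?_, L.sub_mem g.2 hz⟩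
    have hgz : (g : E) - z = (1 - s) • k + s • c := by
      rw [AddSubgroup.vadd_def, vadd_eq_add] at hgk
      linear_combination (norm := module) hxz - hgk
    show (g : E) - z ∈ K
    rw [hgz]
    exact hK hk hc (by linarith) hs0 (by ring)
  · intro g _ h _ hgh
    exact Subtype.ext (sub_left_injective hgh)

theorem addHaar_smul_le_encard_mul {E : Type*} [NormedAddCommGroup E] [NormedSpace ℝ E]
    [MeasurableSpace E] [BorelSpace E] [FiniteDimensional ℝ E] {μ : Measure E}
    [μ.IsAddHaarMeasure] {L : AddSubgroup E} [Countable L] {F : Set E}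
    (fund : IsAddFundamentalDomain L F μ) {K : Set E} (hK : Convex ℝ K) {s : ℝ} (hs0 : 0 ≤ s)
    (hs1 : s ≤ 1) (hcov : IsCoveringScale K L s) :
    ENNReal.ofReal ((1 - s) ^ finrank ℝ E) * μ K ≤ (K ∩ L).encard * μ F := by
  rw [← Measure.addHaar_smul_of_nonneg μ (sub_nonneg.2 hs1)]
  exact fund.measure_le_mul_of_encard_le ((hK.smul _).nullMeasurableSet μ)
    (encard_vadd_mem_smul_le hK hs0 hs1 hcov)

theorem exists_isCoveringScale_span {E ι : Type*} [NormedAddCommGroup E] [NormedSpace ℝ E]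
    [Fintype ι] (b : Basis ι ℝ E) {K : Set E} (hK : (interior K).Nonempty) :
    ∃ s, 0 ≤ s ∧ IsCoveringScale K (span ℤ (range b)) s := by
  obtain ⟨x₀, hx₀⟩ := hK
  obtain ⟨ε, hε, hball⟩ := Metric.isOpen_iff.mp isOpen_interior x₀ hx₀
  obtain ⟨r, hr⟩ := (ZSpan.fundamentalDomain_isBounded b).subset_ball 0
  have hr0 : 0 < r :=
    (norm_nonneg _).trans_lt (by simpa using hr (ZSpan.fract_mem_fundamentalDomain b 0))
  have hs : 0 < r / ε := by positivity
  -- `(r / ε) • ball x₀ ε = ball ((r / ε) • x₀) r` contains a translate of the fundamental domain.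
  refine ⟨r / ε, hs.le, fun x => ?_⟩
  set y := x - (r / ε) • x₀
  refine ⟨x₀ + (r / ε)⁻¹ • ZSpan.fract b y, interior_subset (hball ?_), ZSpan.floor b y,
    (ZSpan.floor b y).2, ?_⟩
  · have hy : ‖ZSpan.fract b y‖ < r := by simpa using hr (ZSpan.fract_mem_fundamentalDomain b y)
    rw [Metric.mem_ball, dist_self_add_left, norm_smul, Real.norm_of_nonneg (by positivity),
      inv_div, div_mul_eq_mul_div, div_lt_iff₀ hr0]
    nlinarith
  · rw [smul_add, smul_inv_smul₀ hs.ne', ZSpan.fract_apply]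
    simp only [y]
    abel

theorem coe_span_range_basisFun (n : ℕ) :
    (span ℤ (range (Pi.basisFun ℝ (Fin n))) : Set (Fin n → ℝ)) = intLat n := by
  ext x
  simp [Basis.mem_span_iff_repr_mem, intLat, eq_comm]

theorem volume_fundamentalDomain_basisFun (n : ℕ) :
    volume (ZSpan.fundamentalDomain (Pi.basisFun ℝ (Fin n))) = 1 := by
  simp [ZSpan.fundamentalDomain_pi_basisFun, volume_pi_pi]

theorem pow_mul_volume_le_latCount {n : ℕ} {K : Set (Fin n → ℝ)} (hK : Convex ℝ K)
    (hKb : Bornology.IsBounded K) {s : ℝ} (hs0 : 0 ≤ s) (hs1 : s ≤ 1)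
    (hcov : IsCoveringScale K (intLat n) s) :
    (1 - s) ^ n * (volume K).toReal ≤ latCount K := by
  set Λ := span ℤ (range (Pi.basisFun ℝ (Fin n)))
  have hΛ : (Λ : Set (Fin n → ℝ)) = intLat n := coe_span_range_basisFun n
  have : Countable Λ.toAddSubgroup := inferInstanceAs (Countable Λ)
  have hvol := addHaar_smul_le_encard_mul (ZSpan.isAddFundamentalDomain' _ volume) hK hs0 hs1
    (L := Λ.toAddSubgroup) (by rwa [coe_toAddSubgroup, hΛ])
  rw [volume_fundamentalDomain_basisFun, finrank_fin_fun, mul_one, coe_toAddSubgroup, hΛ] at hvol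
  have hfin : (K ∩ intLat n).Finite := hΛ ▸ ZSpan.setFinite_inter _ hKb
  rw [← hfin.cast_ncard_eq] at hvol
  have := ENNReal.toReal_mono (by simp) hvol
  rwa [ENNReal.toReal_mul, ENNReal.toReal_ofReal (pow_nonneg (sub_nonneg.2 hs1) n),
    ENat.toENNReal_coe, ENNReal.toReal_natCast, ← Nat.card_coe_set_eq] at this

theorem covRad_le {n : ℕ} {K : Set (Fin n → ℝ)} {s : ℝ} (hs0 : 0 ≤ s)
    (hcov : IsCoveringScale K (intLat n) s) : covRad K ≤ s :=
  csInf_le ⟨0, fun _ h => h.1⟩ ⟨hs0, hcov⟩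

theorem exists_isCoveringScale_lt_of_covRad_lt {n : ℕ} {K : Set (Fin n → ℝ)}
    (hK : (interior K).Nonempty) {s : ℝ} (hs : covRad K < s) :
    ∃ t, 0 ≤ t ∧ t < s ∧ IsCoveringScale K (intLat n) t := by
  have hne : {t : ℝ | 0 ≤ t ∧ IsCoveringScale K (intLat n) t}.Nonempty := by
    obtain ⟨t, ht0, ht⟩ := exists_isCoveringScale_span (Pi.basisFun ℝ (Fin n)) hK
    exact ⟨t, ht0, coe_span_range_basisFun n ▸ ht⟩
  obtain ⟨t, ⟨ht0, ht⟩, hts⟩ := exists_lt_of_csInf_lt hne hs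
  exact ⟨t, ht0, hts, ht⟩

/-- if `μ(K) ≤ 1` then `(1-μ(K))^n · vol(K) ≤ G(K)`. -/
theorem covRad_volume_lower_bound {n : ℕ} (K : Set (Fin n → ℝ))
    (hconv : Convex ℝ K) (hcomp : IsCompact K) (hint : (interior K).Nonempty)
    (hmu : covRad K ≤ 1) :
    (1 - covRad K) ^ n * (volume K).toReal ≤ (latCount K : ℝ) := by
  have hIoc : ∀ s ∈ Ioc (covRad K) 1, (1 - s) ^ n * (volume K).toReal ≤ latCount K := by
    rintro s ⟨hs, hs1⟩
    obtain ⟨t, ht0, hts, ht⟩ := exists_isCoveringScale_lt_of_covRad_lt hint hs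
    calc (1 - s) ^ n * (volume K).toReal ≤ (1 - t) ^ n * (volume K).toReal := by gcongr
      _ ≤ latCount K := pow_mul_volume_le_latCount hconv hcomp.isBounded ht0 (by linarith) ht
  rcases hmu.lt_or_eq with hlt | heq
  · have hclosed : IsClosed {s : ℝ | (1 - s) ^ n * (volume K).toReal ≤ latCount K} :=
      isClosed_le (by fun_prop) continuous_const
    exact hclosed.closure_subset_iff.mpr hIoc (by rw [closure_Ioc hlt.ne]; exact ⟨le_rfl, hmu⟩)
  · rcases n.eq_zero_or_pos with rfl | hn
    · obtain ⟨c, hc⟩ := hint.mono interior_subset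
      have := covRad_le le_rfl fun x => ⟨c, hc, x, fun i => i.elim0, Subsingleton.elim _ _⟩
      linarith
    · rw [heq, sub_self, zero_pow hn.ne', zero_mul]
      positivity
end

section
/- For every convex body K in R^n, the number of lattice points satisfies |K ∩ Z^n| ≤ vol(K)·(1+μ(K))^n, where μ(K) is the covering radius of K with respect to Z^n. -/
open MeasureTheory Pointwise
open scoped ENNReal

namespace CovRadAux

variable {n : ℕ}

/-- Coercion from integer vectors to real vectors. -/
noncomputable def cv (g : Fin n → ℤ) : Fin n → ℝ := fun i => (g i : ℝ)

/-- Componentwise floor. -/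
noncomputable def fl (x : Fin n → ℝ) : Fin n → ℤ := fun i => ⌊x i⌋

lemma cv_mem_intLat (g : Fin n → ℤ) : cv g ∈ intLat n := fun i => ⟨g i, rfl⟩

lemma mem_intLat_iff {x : Fin n → ℝ} : x ∈ intLat n ↔ ∃ g : Fin n → ℤ, cv g = x := by
  constructor
  · intro h
    choose g hg using h
    exact ⟨g, funext fun i => (hg i).symm⟩
  · rintro ⟨g, rfl⟩; exact cv_mem_intLat g

lemma cv_fl (x : Fin n → ℝ) (hx : x ∈ intLat n) : cv (fl x) = x := by
  obtain ⟨g, rfl⟩ := mem_intLat_iff.1 hx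
  funext i
  simp [cv, fl]

lemma cv_sub (a b : Fin n → ℤ) : cv (a - b) = cv a - cv b := by
  funext i; simp [cv]

/-- Lattice points in a compact set form a finite set. -/
lemma finite_inter {K : Set (Fin n → ℝ)} (hcomp : IsCompact K) :
    (K ∩ intLat n).Finite := by
  obtain ⟨R, hR⟩ := hcomp.isBounded.subset_closedBall 0
  have : (K ∩ intLat n) ⊆ cv '' (Set.pi Set.univ fun _ : Fin n =>
      (Set.Icc (-⌈R⌉) ⌈R⌉ : Set ℤ)) := by
    rintro x ⟨hxK, hxL⟩
    obtain ⟨g, rfl⟩ := mem_intLat_iff.1 hxL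
    refine ⟨g, fun i _ => ?_, rfl⟩
    have hn : ‖cv g‖ ≤ R := by simpa using hR hxK
    have hi : |(g i : ℝ)| ≤ R := le_trans (norm_le_pi_norm (cv g) i) hn
    have h1 : (g i : ℝ) ≤ (⌈R⌉ : ℝ) := by
      have := le_abs_self ((g i : ℝ)); have := Int.le_ceil R; linarith
    have h2 : (-(⌈R⌉ : ℝ)) ≤ (g i : ℝ) := by
      have := neg_abs_le ((g i : ℝ)); have := Int.le_ceil R; linarith
    constructor
    · exact_mod_cast h2
    · exact_mod_cast h1
  exact Set.Finite.subset (Set.Finite.image _ (Set.Finite.pi fun _ => Set.finite_Icc _ _)) this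

/-- The half-open unit cube. -/
def cube (n : ℕ) : Set (Fin n → ℝ) := Set.pi Set.univ fun _ => Set.Ico (0:ℝ) 1

lemma cube_measurable : MeasurableSet (cube n) :=
  MeasurableSet.univ_pi fun _ => measurableSet_Ico

lemma volume_cube : volume (cube n) = 1 := by
  rw [cube, volume_pi_pi]
  simp [Real.volume_Ico]

/-- The translated cube with "bottom corner" `g`, described by floors. -/
def cubeG (g : Fin n → ℤ) : Set (Fin n → ℝ) := {x | ∀ i, ⌊x i⌋ = g i}

lemma cubeG_eq (g : Fin n → ℤ) :
    cubeG g = Set.pi Set.univ fun i => Set.Ico ((g i : ℝ)) ((g i : ℝ) + 1) := by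
  ext x
  simp only [cubeG, Set.mem_setOf_eq, Set.mem_pi, Set.mem_univ, forall_true_left,
    Set.mem_Ico]
  refine forall_congr' fun i => ?_
  rw [Int.floor_eq_iff]

lemma cubeG_measurable (g : Fin n → ℤ) : MeasurableSet (cubeG g) := by
  rw [cubeG_eq]
  exact MeasurableSet.univ_pi fun _ => measurableSet_Ico

lemma iUnion_cubeG : (⋃ g : Fin n → ℤ, cubeG g) = Set.univ := by
  ext x
  simp only [Set.mem_iUnion, Set.mem_univ, iff_true]
  exact ⟨fl x, fun i => rfl⟩

lemma pairwise_cubeG : Pairwise (Function.onFun Disjoint (cubeG (n := n))) := by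
  intro g g' hgg'
  refine Set.disjoint_left.2 fun x hx hx' => hgg' ?_
  funext i
  rw [← hx i, ← hx' i]

lemma preimage_add_cubeG (g : Fin n → ℤ) :
    (fun x => cv g + x) ⁻¹' cubeG g = cube n := by
  ext x
  simp only [Set.mem_preimage, cubeG, Set.mem_setOf_eq, cube, Set.mem_pi, Set.mem_univ,
    forall_true_left, Set.mem_Ico]
  refine forall_congr' fun i => ?_
  have : ⌊(cv g + x) i⌋ = g i + ⌊x i⌋ := by
    simp [cv, Int.floor_intCast_add]
  rw [this]
  constructor
  · intro h
    have h0 : ⌊x i⌋ = 0 := by omega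
    exact ⟨Int.floor_eq_zero_iff.1 h0 |>.1, Int.floor_eq_zero_iff.1 h0 |>.2⟩
  · intro h
    have h0 : ⌊x i⌋ = 0 := Int.floor_eq_zero_iff.2 ⟨h.1, h.2⟩
    omega

/-- Unfolding the volume of a set over the lattice partition. -/
lemma volume_eq_tsum {S : Set (Fin n → ℝ)} (hS : MeasurableSet S) :
    volume S = ∑' g : Fin n → ℤ, volume (((fun x => cv g + x) ⁻¹' S) ∩ cube n) := by
  have h1 : volume S = ∑' g : Fin n → ℤ, volume (S ∩ cubeG g) := by
    have hd : Pairwise (Function.onFun Disjoint fun g : Fin n → ℤ => S ∩ cubeG g) :=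
      fun g g' h => Disjoint.mono Set.inter_subset_right Set.inter_subset_right
        (pairwise_cubeG h)
    rw [← measure_iUnion hd (fun g => hS.inter (cubeG_measurable g)), ← Set.inter_iUnion,
      iUnion_cubeG, Set.inter_univ]
  rw [h1]
  refine tsum_congr fun g => ?_
  rw [← measure_preimage_add volume (cv g) (S ∩ cubeG g)]
  congr 1
  rw [Set.preimage_inter, preimage_add_cubeG]

/-- The pointwise counting bound. -/
lemma pointwise_bound {K : Set (Fin n → ℝ)} (hconv : Convex ℝ K)
    (hfin : (K ∩ intLat n).Finite) {μ' : ℝ} (hμ0 : 0 ≤ μ')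
    (hcov : ∀ x : Fin n → ℝ, ∃ c ∈ K, ∃ z ∈ intLat n, x = μ' • c + z)
    (t : Fin n → ℝ) :
    (latCount K : ℝ≥0∞) ≤
      ∑' g : Fin n → ℤ, Set.indicator ((fun x => cv g + x) ⁻¹' ((1 + μ') • K)) 1 t := by
  obtain ⟨c₀, hc₀, w, hw, ht⟩ := hcov t
  obtain ⟨gw, hgw⟩ := mem_intLat_iff.1 hw
  set F : Finset (Fin n → ℝ) := hfin.toFinset with hF
  have hcard : latCount K = F.card := by
    rw [latCount, Nat.card_coe_set_eq, Set.ncard_eq_toFinset_card _ hfin]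
  set T : Finset (Fin n → ℤ) := F.image (fun p => fl p - gw) with hT
  have hinj : Set.InjOn (fun p => fl p - gw) F := by
    intro p hp q hq hpq
    have hp' : p ∈ K ∩ intLat n := by simpa [hF] using hp
    have hq' : q ∈ K ∩ intLat n := by simpa [hF] using hq
    have : fl p = fl q := sub_left_inj.1 hpq
    calc p = cv (fl p) := (cv_fl p hp'.2).symm
    _ = cv (fl q) := by rw [this]
    _ = q := cv_fl q hq'.2
  have hTcard : T.card = F.card := Finset.card_image_of_injOn hinj
  have hmem : ∀ z ∈ T, t ∈ (fun x => cv z + x) ⁻¹' ((1 + μ') • K) := by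
    intro z hz
    obtain ⟨p, hp, rfl⟩ := Finset.mem_image.1 hz
    have hp' : p ∈ K ∩ intLat n := by simpa [hF] using hp
    have hcalc : cv (fl p - gw) + t = p + μ' • c₀ := by
      rw [cv_sub, cv_fl p hp'.2, hgw, ht]
      abel
    have : p + μ' • c₀ ∈ (1 + μ') • K := by
      rw [hconv.add_smul zero_le_one hμ0]
      exact Set.add_mem_add (by simpa using hp'.1) (Set.smul_mem_smul_set hc₀)
    simpa [Set.mem_preimage, hcalc] using this
  calc (latCount K : ℝ≥0∞) = ∑ z ∈ T, 1 := by
        rw [Finset.sum_const, hTcard, ← hcard]; simp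
    _ = ∑ z ∈ T, Set.indicator ((fun x => cv z + x) ⁻¹' ((1 + μ') • K)) 1 t := by
        refine Finset.sum_congr rfl fun z hz => ?_
        rw [Set.indicator_of_mem (hmem z hz)]; rfl
    _ ≤ _ := ENNReal.sum_le_tsum T

/-- Main counting estimate for a fixed covering parameter. -/
lemma count_le_volume_smul {K : Set (Fin n → ℝ)} (hconv : Convex ℝ K)
    (hcomp : IsCompact K) {μ' : ℝ} (hμ0 : 0 ≤ μ')
    (hcov : ∀ x : Fin n → ℝ, ∃ c ∈ K, ∃ z ∈ intLat n, x = μ' • c + z) :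
    (latCount K : ℝ≥0∞) ≤ volume ((1 + μ') • K) := by
  have hScomp : IsCompact ((1 + μ') • K) := hcomp.smul _
  have hS : MeasurableSet ((1 + μ') • K) := hScomp.measurableSet
  have hSg : ∀ g : Fin n → ℤ, MeasurableSet ((fun x => cv g + x) ⁻¹' ((1 + μ') • K)) :=
    fun g => hS.preimage (measurable_const_add _)
  rw [volume_eq_tsum hS]
  have h1 : ∀ g : Fin n → ℤ, volume (((fun x => cv g + x) ⁻¹' ((1 + μ') • K)) ∩ cube n)
      = ∫⁻ t in cube n, Set.indicator ((fun x => cv g + x) ⁻¹' ((1 + μ') • K)) 1 t := by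
    intro g
    rw [lintegral_indicator_one (hSg g), Measure.restrict_apply (hSg g)]
  calc (latCount K : ℝ≥0∞)
      = ∫⁻ _ in cube n, (latCount K : ℝ≥0∞) := by
        rw [setLIntegral_const, volume_cube, mul_one]
    _ ≤ ∫⁻ t in cube n,
          ∑' g : Fin n → ℤ, Set.indicator ((fun x => cv g + x) ⁻¹' ((1 + μ') • K)) 1 t :=
        lintegral_mono fun t =>
          pointwise_bound hconv (finite_inter hcomp) hμ0 hcov t
    _ = ∑' g : Fin n → ℤ, ∫⁻ t in cube n,
          Set.indicator ((fun x => cv g + x) ⁻¹' ((1 + μ') • K)) 1 t :=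
        lintegral_tsum fun g => (measurable_one.indicator (hSg g)).aemeasurable
    _ = ∑' g : Fin n → ℤ,
          volume (((fun x => cv g + x) ⁻¹' ((1 + μ') • K)) ∩ cube n) := by
        exact tsum_congr fun g => (h1 g).symm

/-- The real-valued bound for a fixed covering parameter. -/
lemma count_le_real {K : Set (Fin n → ℝ)} (hconv : Convex ℝ K)
    (hcomp : IsCompact K) {μ' : ℝ} (hμ0 : 0 ≤ μ')
    (hcov : ∀ x : Fin n → ℝ, ∃ c ∈ K, ∃ z ∈ intLat n, x = μ' • c + z) :
    (latCount K : ℝ) ≤ (volume K).toReal * (1 + μ') ^ n := by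
  have h1 : (latCount K : ℝ≥0∞) ≤ volume ((1 + μ') • K) :=
    count_le_volume_smul hconv hcomp hμ0 hcov
  have h2 : volume ((1 + μ') • K) = ENNReal.ofReal ((1 + μ') ^ n) * volume K := by
    rw [Measure.addHaar_smul, Module.finrank_fintype_fun_eq_card, Fintype.card_fin,
      abs_pow, abs_of_nonneg (by linarith : (0:ℝ) ≤ 1 + μ')]
  have hfin : volume ((1 + μ') • K) ≠ ⊤ := by
    rw [h2]
    exact ENNReal.mul_ne_top ENNReal.ofReal_ne_top hcomp.measure_lt_top.ne
  have h3 := ENNReal.toReal_mono hfin h1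
  rw [ENNReal.toReal_natCast] at h3
  rw [h2, ENNReal.toReal_mul, ENNReal.toReal_ofReal (by positivity)] at h3
  linarith [h3]

end CovRadAux

/-- `G(K) ≤ vol(K) · (1+μ(K))^n`. -/
theorem covRad_volume_upper_bound {n : ℕ} (K : Set (Fin n → ℝ))
    (hconv : Convex ℝ K) (hcomp : IsCompact K) (hint : (interior K).Nonempty) :
    (latCount K : ℝ) ≤ (volume K).toReal * (1 + covRad K) ^ n := by
  classical
  set A : Set ℝ :=
    {μ : ℝ | 0 ≤ μ ∧ ∀ x : Fin n → ℝ, ∃ c ∈ K, ∃ z ∈ intLat n, x = μ • c + z} with hA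
  -- A is nonempty
  obtain ⟨x0, hx0⟩ := hint
  have hK_nhds : K ∈ nhds x0 := mem_interior_iff_mem_nhds.1 hx0
  obtain ⟨r, hr, hball⟩ := Metric.mem_nhds_iff.1 hK_nhds
  have hAne : A.Nonempty := by
    refine ⟨r⁻¹, by positivity, fun x => ?_⟩
    set v : Fin n → ℝ := x - r⁻¹ • x0 with hv
    set z : Fin n → ℝ := CovRadAux.cv (fun i => round (v i)) with hz
    refine ⟨x0 + r • (v - z), ?_, z, CovRadAux.cv_mem_intLat _, ?_⟩
    · apply hball
      rw [Metric.mem_ball, dist_eq_norm]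
      have hnorm : ‖v - z‖ ≤ 1/2 := by
        refine (pi_norm_le_iff_of_nonneg (by norm_num)).2 fun i => ?_
        have : (v - z) i = v i - round (v i) := by simp [hz, CovRadAux.cv]
        rw [this, Real.norm_eq_abs]
        exact abs_sub_round (v i)
      have : ‖x0 + r • (v - z) - x0‖ = r * ‖v - z‖ := by
        rw [add_sub_cancel_left, norm_smul, Real.norm_eq_abs, abs_of_pos hr]
      rw [this]
      nlinarith
    · rw [smul_add, smul_smul, inv_mul_cancel₀ hr.ne', one_smul, hv]
      abel
  have hAbdd : BddBelow A := ⟨0, fun a ha => ha.1⟩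
  have hsInf0 : 0 ≤ sInf A := le_csInf hAne fun a ha => ha.1
  have hcr : covRad K = sInf A := rfl
  -- ε-approximation
  have hstep : ∀ ε : ℝ, 0 < ε →
      (latCount K : ℝ) ≤ (volume K).toReal * (1 + sInf A + ε) ^ n := by
    intro ε hε
    obtain ⟨μ', hμ'A, hμ'lt⟩ := Real.lt_sInf_add_pos hAne hε
    calc (latCount K : ℝ) ≤ (volume K).toReal * (1 + μ') ^ n :=
          CovRadAux.count_le_real hconv hcomp hμ'A.1 hμ'A.2
      _ ≤ (volume K).toReal * (1 + sInf A + ε) ^ n := by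
          apply mul_le_mul_of_nonneg_left _ ENNReal.toReal_nonneg
          apply pow_le_pow_left₀ (by linarith [hμ'A.1])
          linarith
  -- take the limit ε → 0⁺
  rw [hcr]
  have hcont : Filter.Tendsto (fun ε : ℝ => (volume K).toReal * (1 + sInf A + ε) ^ n)
      (nhdsWithin 0 (Set.Ioi 0)) (nhds ((volume K).toReal * (1 + sInf A) ^ n)) := by
    have hc : Continuous (fun ε : ℝ => (volume K).toReal * (1 + sInf A + ε) ^ n) := by
      continuity
    have := (hc.tendsto 0).mono_left (nhdsWithin_le_nhds (s := Set.Ioi (0:ℝ)))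
    simpa using this
  exact ge_of_tendsto hcont (Filter.eventually_iff_exists_mem.2
    ⟨Set.Ioi 0, self_mem_nhdsWithin, fun ε hε => hstep ε hε⟩)
end

section
/- Let K be a centered convex body in R^n (centroid at origin), A a k-dimensional affine plane, and L = A − A. Then (K ∩ A) − (K ∩ A) ⊆ (n+1)·(K ∩ L). -/
/-!
Let `D = M - f a` be the gap between an upper bound `M` of a linear functional `f` on `K` and its
value at a point `a ∈ K`. The homothety of `K` with centre `a` and ratio `1 - s / D` stays in `K`
and inside the superlevel set `{s ≤ M - f}`, so that set has volume at least `(1 - s / D)ⁿ |K|`.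
Integrating over `s` (layer cake) gives `∫_K (M - f) ≥ D |K| / (n + 1)`, while `∫_K f = 0` for a
centered body gives `∫_K (M - f) = M |K|`; hence `-f a ≤ n M`. A functional separating
`(a - b) / (n + 1)` from `K` would violate this bound at `b`, so `(a - b) / (n + 1) ∈ K`, and it
lies in `L` whenever `a, b ∈ A`.
-/

open MeasureTheory Pointwise Set

theorem integral_one_sub_div_pow (D : ℝ) (n : ℕ) :
    ∫ s in (0 : ℝ)..D, (1 - s / D) ^ n = D / (n + 1) := by
  rcases eq_or_ne D 0 with rfl | hD
  · simp
  rw [intervalIntegral.integral_comp_div (fun u => (1 - u) ^ n) hD, zero_div, div_self hD,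
    intervalIntegral.integral_comp_sub_left (fun u => u ^ n) 1]
  norm_num [integral_pow]
  ring

theorem ofReal_div_mul_le_lintegral_of_measure_le {α : Type*} [MeasurableSpace α]
    (ν : Measure α) {g : α → ℝ} (hg_nonneg : 0 ≤ᵐ[ν] g) (hg : AEMeasurable g ν) (n : ℕ)
    (D : ℝ) (V : ENNReal)
    (hsuper : ∀ s ∈ Ioo 0 D, ENNReal.ofReal ((1 - s / D) ^ n) * V ≤ ν {a | s ≤ g a}) :
    ENNReal.ofReal (D / (n + 1)) * V ≤ ∫⁻ a, ENNReal.ofReal (g a) ∂ν := by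
  rcases le_or_gt D 0 with hD | hD
  · rw [ENNReal.ofReal_of_nonpos (div_nonpos_of_nonpos_of_nonneg hD (by positivity)), zero_mul]
    exact bot_le
  have hpow_nonneg : ∀ s ∈ Ioc 0 D, 0 ≤ (1 - s / D) ^ n := fun s hs =>
    pow_nonneg (sub_nonneg.2 ((div_le_one hD).2 hs.2)) n
  calc ENNReal.ofReal (D / (n + 1)) * V
      = (∫⁻ s in Ioc 0 D, ENNReal.ofReal ((1 - s / D) ^ n)) * V := by
        rw [← ofReal_integral_eq_lintegral_ofReal, ← intervalIntegral.integral_of_le hD.le,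
          integral_one_sub_div_pow]
        · exact (by fun_prop : Continuous fun s : ℝ => (1 - s / D) ^ n).integrableOn_Ioc
        · exact (ae_restrict_mem measurableSet_Ioc).mono hpow_nonneg
    _ = ∫⁻ s in Ioo 0 D, ENNReal.ofReal ((1 - s / D) ^ n) * V := by
        rw [lintegral_mul_const _ (by fun_prop), Measure.restrict_congr_set Ioo_ae_eq_Ioc]
    _ ≤ ∫⁻ s in Ioo 0 D, ν {a | s ≤ g a} := setLIntegral_mono' measurableSet_Ioo hsuper
    _ ≤ ∫⁻ s in Ioi 0, ν {a | s ≤ g a} := lintegral_mono_set Ioo_subset_Ioi_self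
    _ = ∫⁻ a, ENNReal.ofReal (g a) ∂ν := (lintegral_eq_lintegral_meas_le ν hg_nonneg hg).symm

section

open Module

variable {E : Type*} [NormedAddCommGroup E] [NormedSpace ℝ E] [FiniteDimensional ℝ E]
  [MeasurableSpace E] [BorelSpace E] (μ : Measure E) [μ.IsAddHaarMeasure]

theorem Convex.ofReal_pow_mul_measure_le {K : Set E} (hK : Convex ℝ K) (f : E →L[ℝ] ℝ) {M : ℝ}
    (hM : ∀ y ∈ K, f y ≤ M) {a : E} (ha : a ∈ K) {c : ℝ} (hc : c ∈ Icc 0 1) :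
    ENNReal.ofReal (c ^ finrank ℝ E) * μ K ≤
      μ ({y | (1 - c) * (M - f a) ≤ M - f y} ∩ K) := by
  rw [← abs_of_nonneg (pow_nonneg hc.1 _), ← Measure.addHaar_image_homothety]
  refine measure_mono ?_
  rintro _ ⟨y, hy, rfl⟩
  rw [AffineMap.homothety_eq_lineMap]
  refine ⟨?_, hK.lineMap_mem ha hy hc⟩
  have hfy := hM y hy
  simp only [mem_ofPred_eq, AffineMap.lineMap_apply_module, map_add, map_smul, smul_eq_mul]
  nlinarith [hc.1]

theorem neg_le_finrank_mul_of_integral_eq_zero {K : Set E} (hK : Convex ℝ K)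
    (hcomp : IsCompact K) (hint : (interior K).Nonempty) (hcent : ∫ x in K, x ∂μ = 0)
    (f : E →L[ℝ] ℝ) {M : ℝ} (hM : ∀ y ∈ K, f y ≤ M) {a : E} (ha : a ∈ K) :
    -f a ≤ finrank ℝ E * M := by
  have := FiniteDimensional.complete ℝ E
  have hKm : MeasurableSet K := hcomp.isClosed.measurableSet
  have hV : 0 < μ.real K :=
    ENNReal.toReal_pos (μ.measure_pos_of_nonempty_interior hint).ne' hcomp.measure_lt_top.ne
  have hgap_nonneg : 0 ≤ᵐ[μ.restrict K] fun y => M - f y :=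
    (ae_restrict_mem hKm).mono fun y hy => sub_nonneg.2 (hM y hy)
  have hgap_int : IntegrableOn (fun y => M - f y) K μ :=
    (by fun_prop : Continuous fun y => M - f y).continuousOn.integrableOn_compact hcomp
  have hmean : ∫ y in K, (M - f y) ∂μ = M * μ.real K := by
    rw [integral_sub (integrableOn_const (C := M) hcomp.measure_lt_top.ne)
      (f.continuous.continuousOn.integrableOn_compact hcomp), setIntegral_const,
      f.integral_comp_comm ((continuousOn_id' K).integrableOn_compact hcomp), hcent,
      map_zero, smul_eq_mul, sub_zero, mul_comm]
  have hsuper : ∀ s ∈ Ioo 0 (M - f a),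
      ENNReal.ofReal ((1 - s / (M - f a)) ^ finrank ℝ E) * μ K ≤
        μ.restrict K {y | s ≤ M - f y} := by
    intro s hs
    have hD : 0 < M - f a := hs.1.trans hs.2
    rw [Measure.restrict_apply' hKm]
    convert hK.ofReal_pow_mul_measure_le μ f hM ha ⟨?_, ?_⟩ using 5
    · rw [sub_sub_cancel, div_mul_cancel₀ _ hD.ne']
    · exact sub_nonneg.2 ((div_le_one hD).2 hs.2.le)
    · exact sub_le_self _ (div_nonneg hs.1.le hD.le)
  have hlayer : ENNReal.ofReal ((M - f a) / (finrank ℝ E + 1) * μ.real K)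
      ≤ ENNReal.ofReal (M * μ.real K) := by
    rw [ENNReal.ofReal_mul (div_nonneg (sub_nonneg.2 (hM a ha)) (by positivity)),
      ofReal_measureReal hcomp.measure_lt_top.ne, ← hmean,
      ofReal_integral_eq_lintegral_ofReal hgap_int hgap_nonneg]
    exact ofReal_div_mul_le_lintegral_of_measure_le (μ.restrict K) hgap_nonneg
      hgap_int.aestronglyMeasurable.aemeasurable _ _ _ hsuper
  have hgap_le := le_of_mul_le_mul_right
    ((ENNReal.ofReal_le_ofReal_iff (hmean ▸ integral_nonneg_of_ae hgap_nonneg)).1 hlayer) hV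
  rw [div_le_iff₀ (by positivity)] at hgap_le
  linarith

theorem inv_add_one_smul_sub_mem_of_integral_eq_zero {K : Set E} (hK : Convex ℝ K)
    (hcomp : IsCompact K) (hint : (interior K).Nonempty) (hcent : ∫ x in K, x ∂μ = 0)
    {a b : E} (ha : a ∈ K) (hb : b ∈ K) : ((finrank ℝ E : ℝ) + 1)⁻¹ • (a - b) ∈ K := by
  by_contra hout
  obtain ⟨f, u, hfu, hu⟩ := geometric_hahn_banach_closed_point hK hcomp.isClosed hout
  have hwidth := neg_le_finrank_mul_of_integral_eq_zero μ hK hcomp hint hcent f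
    (fun y hy => (hfu y hy).le) hb
  rw [map_smul, map_sub, smul_eq_mul, lt_inv_mul_iff₀ (by positivity)] at hu
  linarith [hfu a ha]

end

theorem section_difference_subset_of_centered_general {n : ℕ} (K : Set (Fin n → ℝ))
    (hconv : Convex ℝ K) (hcomp : IsCompact K) (hint : (interior K).Nonempty)
    (hcent : (∫ x in K, x ∂(volume)) = (0 : Fin n → ℝ))
    (L : Submodule ℝ (Fin n → ℝ))
    (t : Fin n → ℝ) (A : Set (Fin n → ℝ)) (hA : A = t +ᵥ (L : Set (Fin n → ℝ))) :
    (K ∩ A) - (K ∩ A) ⊆ ((n : ℝ) + 1) • (K ∩ (L : Set (Fin n → ℝ))) := by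
  rintro _ ⟨a, ⟨haK, haA⟩, b, ⟨hbK, hbA⟩, rfl⟩
  have hdiff : a - b ∈ L := by
    subst hA
    obtain ⟨la, hla, rfl⟩ := haA
    obtain ⟨lb, hlb, rfl⟩ := hbA
    simpa only [vadd_eq_add, add_sub_add_left_eq_sub] using L.sub_mem hla hlb
  have hmem := inv_add_one_smul_sub_mem_of_integral_eq_zero volume hconv hcomp hint hcent haK hbK
  rw [Module.finrank_fin_fun] at hmem
  exact ⟨_, ⟨hmem, L.smul_mem _ hdiff⟩, smul_inv_smul₀ (by positivity) _⟩

/-- for a centered convex body `K` (centroid at the origin), a `k`-dimensional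
affine plane `A = t + L` with parallel linear plane `L`, we have
`(K ∩ A) - (K ∩ A) ⊆ (n+1) • (K ∩ L)`. -/
theorem section_difference_subset_of_centered {n k : ℕ} (K : Set (Fin n → ℝ))
    (hconv : Convex ℝ K) (hcomp : IsCompact K) (hint : (interior K).Nonempty)
    (hcent : (∫ x in K, x ∂(volume)) = (0 : Fin n → ℝ))
    (L : Submodule ℝ (Fin n → ℝ)) (hk : Module.finrank ℝ L = k)
    (t : Fin n → ℝ) (A : Set (Fin n → ℝ)) (hA : A = t +ᵥ (L : Set (Fin n → ℝ))) :
    (K ∩ A) - (K ∩ A) ⊆ ((n : ℝ) + 1) • (K ∩ (L : Set (Fin n → ℝ))) :=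
  section_difference_subset_of_centered_general K hconv hcomp hint hcent L t A hA
end

section
/- For every convex body K in R^n with |K ∩ Z^n| ≥ 1, there exists a line ℓ ⊂ R^n such that |K ∩ Z^n|^{1/n} ≤ |K ∩ ℓ ∩ Z^n| (Rabinowitz's theorem). -/
/-!
Suppose every line meets `K` in at most `m` lattice points. Two distinct lattice points `z ≠ w`
of `K` that are congruent modulo `m` would give `w = z + m • d` with `d ≠ 0`, and by convexity the
`m + 1` lattice points `z, z + d, …, z + m • d` of the segment `[z, w]` would lie on one line.
So reduction modulo `m` is injective on `K ∩ ℤⁿ`, whence `|K ∩ ℤⁿ| ≤ mⁿ`. Apply this with `m` the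
largest number of lattice points of `K` on a line.
-/

open MeasureTheory Pointwise

def line {n : ℕ} (p v : Fin n → ℝ) : Set (Fin n → ℝ) := {x | ∃ s : ℝ, x = p + s • v}

def intVecCast (n : ℕ) : (Fin n → ℤ) →+ (Fin n → ℝ) := (Int.castAddHom ℝ).compLeft (Fin n)

@[simp]
lemma intVecCast_apply {n : ℕ} (z : Fin n → ℤ) (i : Fin n) : intVecCast n z i = z i := rfl

lemma isometry_intVecCast (n : ℕ) : Isometry (intVecCast n) :=
  Isometry.piMap (fun _ ↦ ((↑) : ℤ → ℝ)) fun _ ↦ Real.isometry_intCast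

lemma intVecCast_ne_zero {n : ℕ} {z : Fin n → ℤ} (hz : z ≠ 0) : intVecCast n z ≠ 0 :=
  (map_ne_zero_iff _ (isometry_intVecCast n).injective).mpr hz

lemma range_intVecCast (n : ℕ) : Set.range (intVecCast n) = intLat n := by
  ext x
  constructor
  · rintro ⟨z, rfl⟩ i
    exact ⟨z i, rfl⟩
  · intro hx
    choose z hz using hx
    exact ⟨z, funext fun i ↦ (hz i).symm⟩

lemma latCount_eq_card_preimage {n : ℕ} (S : Set (Fin n → ℝ)) :
    latCount S = Nat.card ↥(intVecCast n ⁻¹' S) := by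
  rw [latCount, ← range_intVecCast, ← Set.image_preimage_eq_inter_range,
    Nat.card_image_of_injective (isometry_intVecCast n).injective]

lemma finite_preimage_intVecCast {n : ℕ} {S : Set (Fin n → ℝ)} (hS : Bornology.IsBounded S) :
    (intVecCast n ⁻¹' S).Finite :=
  ((isometry_intVecCast n).antilipschitz.isBounded_preimage hS).isCompact_closure.finite_of_discrete
    |>.subset subset_closure

lemma latCount_mono {n : ℕ} {S T : Set (Fin n → ℝ)} (hT : (intVecCast n ⁻¹' T).Finite)
    (hST : S ⊆ T) : latCount S ≤ latCount T := by
  simpa only [latCount_eq_card_preimage] using Nat.card_mono hT (Set.preimage_mono hST)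

lemma succ_le_latCount_inter_line {n : ℕ} {K : Set (Fin n → ℝ)} (hK : Convex ℝ K)
    (hfin : (intVecCast n ⁻¹' K).Finite) {z d : Fin n → ℤ} (hd : d ≠ 0) {m : ℕ}
    (hz : intVecCast n z ∈ K) (hzd : intVecCast n (z + m • d) ∈ K) :
    m + 1 ≤ latCount (K ∩ line (intVecCast n z) (intVecCast n d)) := by
  set L := K ∩ line (intVecCast n z) (intVecCast n d)
  have hcast (k : ℕ) : intVecCast n (z + k • d) = intVecCast n z + (k : ℝ) • intVecCast n d := by
    rw [map_add, map_nsmul, Nat.cast_smul_eq_nsmul]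
  have hmem (k : Fin (m + 1)) : z + (k : ℕ) • d ∈ intVecCast n ⁻¹' L := by
    refine ⟨?_, k, hcast k⟩
    rcases Nat.eq_zero_or_pos m with rfl | hm
    · simpa [Fin.fin_one_eq_zero k] using hz
    rw [hcast] at hzd ⊢
    have hseg := hK.add_smul_sub_mem hz hzd
      (t := (k : ℝ) / m) ⟨by positivity, div_le_one_of_le₀ (by exact_mod_cast k.is_le) m.cast_nonneg⟩
    rwa [add_sub_cancel_left, smul_smul, div_mul_cancel₀ _ (by positivity)] at hseg
  have hinj : Function.Injective fun k : Fin (m + 1) ↦ (⟨_, hmem k⟩ : intVecCast n ⁻¹' L) := by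
    intro k l hkl
    have h : ((k : ℕ) : ℤ) • d = ((l : ℕ) : ℤ) • d := by
      simpa only [natCast_zsmul] using add_left_cancel (congrArg Subtype.val hkl)
    exact Fin.ext (Nat.cast_injective (smul_left_injective ℤ hd h))
  have : Finite (intVecCast n ⁻¹' L) := (hfin.subset fun _ hx ↦ hx.1).to_subtype
  simpa only [latCount_eq_card_preimage, Nat.card_fin] using Nat.card_le_card_of_injective _ hinj

lemma latCount_le_pow_of_forall_latCount_inter_line_le {n : ℕ} {K : Set (Fin n → ℝ)}
    (hK : Convex ℝ K) (hfin : (intVecCast n ⁻¹' K).Finite) {m : ℕ} [NeZero m]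
    (hline : ∀ p v : Fin n → ℝ, v ≠ 0 → latCount (K ∩ line p v) ≤ m) :
    latCount K ≤ m ^ n := by
  let reduce : intVecCast n ⁻¹' K → (Fin n → ZMod m) := fun z i ↦ (z.1 i : ZMod m)
  have hinj : Function.Injective reduce := by
    rintro ⟨z, hz⟩ ⟨w, hw⟩ hzw
    choose d hd using fun i ↦ (ZMod.intCast_eq_intCast_iff_dvd_sub _ _ m).mp (congrFun hzw i)
    have hw_eq : w = z + m • d := funext fun i ↦ by simp [← hd i]
    by_contra hne
    have hd0 : d ≠ 0 := by
      rintro rfl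
      exact hne (Subtype.ext (by simpa using hw_eq.symm))
    have hmany := succ_le_latCount_inter_line hK hfin hd0 hz (hw_eq ▸ hw)
    have hfew := hline (intVecCast n z) (intVecCast n d) (intVecCast_ne_zero hd0)
    omega
  calc latCount K = Nat.card (intVecCast n ⁻¹' K) := latCount_eq_card_preimage K
    _ ≤ Nat.card (Fin n → ZMod m) := Nat.card_le_card_of_injective _ hinj
    _ = m ^ n := by simp

theorem rabinowitz_line_slicing_general {n : ℕ} (hn : 1 ≤ n) (K : Set (Fin n → ℝ))
    (hconv : Convex ℝ K) (hcomp : IsCompact K)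
    (hG : 1 ≤ latCount K) :
    ∃ p v : Fin n → ℝ, v ≠ 0 ∧
      (latCount K : ℝ) ^ (1 / (n : ℝ)) ≤
        (latCount (K ∩ {x | ∃ s : ℝ, x = p + s • v}) : ℝ) := by
  have : Nonempty (Fin n) := ⟨⟨0, hn⟩⟩
  have hfin := finite_preimage_intVecCast hcomp.isBounded
  set counts := {k | ∃ p v : Fin n → ℝ, v ≠ 0 ∧ latCount (K ∩ line p v) = k}
  have hbdd : BddAbove counts := ⟨latCount K, by
    rintro _ ⟨p, v, -, rfl⟩
    exact latCount_mono hfin Set.inter_subset_left⟩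
  obtain ⟨⟨z, hz⟩⟩ := (Nat.card_pos_iff.mp (by rwa [latCount_eq_card_preimage] at hG)).1
  have hdir : intVecCast n 1 ≠ 0 := intVecCast_ne_zero one_ne_zero
  have hcount : 1 ≤ latCount (K ∩ line (intVecCast n z) (intVecCast n 1)) :=
    succ_le_latCount_inter_line hconv hfin one_ne_zero hz (by simpa using hz)
  have hmax : ∀ p v : Fin n → ℝ, v ≠ 0 → latCount (K ∩ line p v) ≤ sSup counts :=
    fun p v hv ↦ le_csSup hbdd ⟨p, v, hv, rfl⟩
  have : NeZero (sSup counts) := ⟨Nat.one_le_iff_ne_zero.mp (hcount.trans (hmax _ _ hdir))⟩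
  obtain ⟨p, v, hv, hpv⟩ : sSup counts ∈ counts :=
    Nat.sSup_mem ⟨_, intVecCast n z, _, hdir, rfl⟩ hbdd
  refine ⟨p, v, hv, ?_⟩
  calc (latCount K : ℝ) ^ (1 / (n : ℝ))
      ≤ (((sSup counts : ℕ) : ℝ) ^ n) ^ (1 / (n : ℝ)) := by
        gcongr
        exact_mod_cast latCount_le_pow_of_forall_latCount_inter_line_le hconv hfin hmax
    _ = latCount (K ∩ line p v) := by
        rw [one_div, Real.pow_rpow_inv_natCast (Nat.cast_nonneg _) (by omega), hpv]

/-- Rabinowitz: for every convex body `K ⊆ ℝⁿ` containing a lattice point,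
there is a line `ℓ` with `G(K)^{1/n} ≤ G(K ∩ ℓ)`. -/
theorem rabinowitz_line_slicing {n : ℕ} (hn : 1 ≤ n) (K : Set (Fin n → ℝ))
    (hconv : Convex ℝ K) (hcomp : IsCompact K) (hne : K.Nonempty)
    (hG : 1 ≤ latCount K) :
    ∃ p v : Fin n → ℝ, v ≠ 0 ∧
      (latCount K : ℝ) ^ (1 / (n : ℝ)) ≤
        (latCount (K ∩ {x | ∃ s : ℝ, x = p + s • v}) : ℝ) :=
  rabinowitz_line_slicing_general hn K hconv hcomp hG
end
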